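/- arXiv:2204.08010 — 4 statements merged into one kernel-verified Lean document; each statement's English description precedes it below -/
import Mathlib

section
/- Let X_n be the random variable with probability generating function P_n(z) = (2^n·z·(2+2z)^n + (2-2z)·(2z+1)^n)/2^(3n). Then Var(X_n) = P_n''(1) + P_n'(1) - (P_n'(1))^2 = n/4 + (2 - 2n/3)·(3/8)^n - 4·(3/8)^(2n). -/
/-!
Both summands of `P_n` are a linear factor times the `n`-th power of a linear polynomial, so
Leibniz' rule reduces `P_n'(1)` and `P_n''(1)` to the first two derivatives of `q ^ n` at a point
where `q` does not vanish. Substituting the resulting closed forms into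
`P''(1) + P'(1) - P'(1)²` is then a ring identity in `n` and `(3/8)^n`.
-/

open Polynomial

section

variable {K : Type*} [Field K]

-- Dividing by `q.eval x` instead of lowering the exponent avoids the truncated `n - 1`, `n - 2`.
theorem eval_derivative_pow_of_eval_ne_zero (q : K[X]) (n : ℕ) {x : K} (hx : q.eval x ≠ 0) :
    (derivative (q ^ n)).eval x = n * q.eval x ^ n * (derivative q).eval x / q.eval x := by
  cases n with
  | zero => simp
  | succ k =>
    rw [derivative_pow_succ]
    simp only [eval_mul, eval_C, eval_pow, pow_succ]
    field_simp
    push_cast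
    ring

theorem eval_derivative_derivative_pow_of_eval_ne_zero (q : K[X]) (n : ℕ) {x : K}
    (hx : q.eval x ≠ 0) :
    (derivative (derivative (q ^ n))).eval x = n * q.eval x ^ n *
      (q.eval x * (derivative (derivative q)).eval x + (n - 1) * (derivative q).eval x ^ 2) /
        q.eval x ^ 2 := by
  cases n with
  | zero => simp
  | succ k =>
    rw [derivative_pow_succ]
    simp only [derivative_mul, derivative_C, zero_mul, zero_add, eval_add, eval_mul, eval_C,
      eval_derivative_pow_of_eval_ne_zero q k hx, eval_pow, pow_succ]
    field_simp
    push_cast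
    ring

end

theorem eight_pow_eq (n : ℕ) : (8 : ℝ) ^ n = 2 ^ n * 4 ^ n := by
  rw [← mul_pow]
  norm_num

-- The normalized partial-dual genus polynomial `P_n` of the planar necklace ribbon graph `N_n`.
noncomputable def necklacePGF (n : ℕ) : ℝ[X] :=
  C ((2 ^ (3 * n) : ℝ)⁻¹) * ((2 : ℝ[X]) ^ n * X * (2 + 2 * X) ^ n + (2 - 2 * X) * (2 * X + 1) ^ n)

theorem necklacePGF_derivative_eval_one (n : ℕ) :
    (derivative (necklacePGF n)).eval 1 = ((n : ℝ) + 2) / 2 - 2 * (3 / 8 : ℝ) ^ n := by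
  have h4 : (2 + 2 * X : ℝ[X]).eval 1 ≠ 0 := by norm_num
  have h3 : (2 * X + 1 : ℝ[X]).eval 1 ≠ 0 := by norm_num
  simp only [necklacePGF, derivative_mul, derivative_add, eval_mul, eval_add,
    eval_derivative_pow_of_eval_ne_zero _ n h4, eval_derivative_pow_of_eval_ne_zero _ n h3]
  norm_num [derivative_pow, pow_mul, div_pow]
  field_simp
  rw [eight_pow_eq]
  ring

theorem necklacePGF_derivative_derivative_eval_one (n : ℕ) :
    (derivative (derivative (necklacePGF n))).eval 1 =
      ((n : ℝ) ^ 2 + 3 * n) / 4 - 8 * n / 3 * (3 / 8 : ℝ) ^ n := by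
  have h4 : (2 + 2 * X : ℝ[X]).eval 1 ≠ 0 := by norm_num
  have h3 : (2 * X + 1 : ℝ[X]).eval 1 ≠ 0 := by norm_num
  simp only [necklacePGF, derivative_mul, derivative_add, eval_mul, eval_add,
    eval_derivative_pow_of_eval_ne_zero _ n h4, eval_derivative_pow_of_eval_ne_zero _ n h3,
    eval_derivative_derivative_pow_of_eval_ne_zero _ n h4,
    eval_derivative_derivative_pow_of_eval_ne_zero _ n h3]
  norm_num [derivative_pow, pow_mul, div_pow]
  field_simp
  rw [eight_pow_eq]
  ring

theorem stmt_4_general (n : ℕ)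
    (P : Polynomial ℝ)
    (hP : P = Polynomial.C (((2 : ℝ) ^ (3 * n))⁻¹) *
      ((2 : Polynomial ℝ) ^ n * X * (2 + 2 * X) ^ n + (2 - 2 * X) * (2 * X + 1) ^ n)) :
    (Polynomial.derivative (Polynomial.derivative P)).eval 1 + (Polynomial.derivative P).eval 1
        - ((Polynomial.derivative P).eval 1) ^ 2
      = (n : ℝ) / 4 + (2 - 2 * (n : ℝ) / 3) * (3 / 8 : ℝ) ^ n - 4 * (3 / 8 : ℝ) ^ (2 * n) := by
  rw [show P = necklacePGF n from hP, necklacePGF_derivative_eval_one,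
    necklacePGF_derivative_derivative_eval_one, pow_mul']
  ring

theorem stmt_4 (n : ℕ) (hn : 1 ≤ n)
    (P : Polynomial ℝ)
    (hP : P = Polynomial.C (((2 : ℝ) ^ (3 * n))⁻¹) *
      ((2 : Polynomial ℝ) ^ n * X * (2 + 2 * X) ^ n + (2 - 2 * X) * (2 * X + 1) ^ n)) :
    (Polynomial.derivative (Polynomial.derivative P)).eval 1 + (Polynomial.derivative P).eval 1
        - ((Polynomial.derivative P).eval 1) ^ 2
      = (n : ℝ) / 4 + (2 - 2 * (n : ℝ) / 3) * (3 / 8 : ℝ) ^ n - 4 * (3 / 8 : ℝ) ^ (2 * n) :=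
  stmt_4_general n P hP
end

section
/- For every real t, lim_{n→∞} exp(-((n+2)/√n)·t) · exp((2/√n)·t) · ((1 + exp((2/√n)·t))/2)^n = exp(t^2/2). -/
open Filter Real Topology

private lemma sinh_slope : Tendsto (fun y : ℝ => Real.sinh y / y) (𝓝[≠] (0:ℝ)) (𝓝 1) := by
  have h : HasDerivAt Real.sinh 1 0 := by simpa using Real.hasDerivAt_sinh 0
  have h2 := hasDerivAt_iff_tendsto_slope.mp h
  refine h2.congr fun y => ?_
  simp [slope_def_field, Real.sinh_zero]

private lemma log1p_slope : Tendsto (fun u : ℝ => Real.log (1 + u) / u) (𝓝[≠] (0:ℝ)) (𝓝 1) := by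
  have h : HasDerivAt Real.log 1 1 := by simpa using Real.hasDerivAt_log one_ne_zero
  have h2 := hasDerivAt_iff_tendsto_slope.mp h
  have hmap : Tendsto (fun u : ℝ => 1 + u) (𝓝[≠] (0:ℝ)) (𝓝[≠] (1:ℝ)) := by
    apply tendsto_nhdsWithin_of_tendsto_nhds_of_eventually_within
    · have : Tendsto (fun u : ℝ => 1 + u) (𝓝 (0:ℝ)) (𝓝 (1:ℝ)) := by
        simpa using (continuous_add_left (1:ℝ)).tendsto (0:ℝ)
      exact this.mono_left nhdsWithin_le_nhds
    · filter_upwards [self_mem_nhdsWithin] with u hu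
      simp only [Set.mem_compl_iff, Set.mem_singleton_iff] at hu ⊢
      intro h; exact hu (by linarith)
  have := h2.comp hmap
  refine this.congr fun u => ?_
  simp [slope_def_field, Real.log_one]

private lemma cosh_sub_one_lim :
    Tendsto (fun x : ℝ => (Real.cosh x - 1) / x ^ 2) (𝓝[≠] (0:ℝ)) (𝓝 (1/2)) := by
  have hhalf : Tendsto (fun x : ℝ => x / 2) (𝓝[≠] (0:ℝ)) (𝓝[≠] (0:ℝ)) := by
    apply tendsto_nhdsWithin_of_tendsto_nhds_of_eventually_within
    · have : Tendsto (fun x : ℝ => x / 2) (𝓝 (0:ℝ)) (𝓝 (0/2:ℝ)) :=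
        (continuous_id.div_const 2).tendsto 0
      simpa using this.mono_left nhdsWithin_le_nhds
    · filter_upwards [self_mem_nhdsWithin] with x hx
      simp only [Set.mem_compl_iff, Set.mem_singleton_iff] at hx ⊢
      intro h; exact hx (by linarith)
  have h1 : Tendsto (fun x : ℝ => Real.sinh (x/2) / (x/2)) (𝓝[≠] (0:ℝ)) (𝓝 1) :=
    sinh_slope.comp hhalf
  have h2 : Tendsto (fun x : ℝ => (1/2) * (Real.sinh (x/2) / (x/2)) ^ 2)
      (𝓝[≠] (0:ℝ)) (𝓝 ((1/2) * 1 ^ 2)) := (h1.pow 2).const_mul _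
  rw [show ((1:ℝ)/2) * 1 ^ 2 = 1/2 by norm_num] at h2
  refine h2.congr' ?_
  filter_upwards [self_mem_nhdsWithin] with x hx
  simp only [Set.mem_compl_iff, Set.mem_singleton_iff] at hx
  have hcosh : Real.cosh x - 1 = 2 * Real.sinh (x/2) ^ 2 := by
    have := Real.cosh_two_mul (x/2)
    have hsq := Real.cosh_sq' (x/2)
    rw [show 2 * (x/2) = x by ring] at this
    rw [this, hsq]; ring
  rw [hcosh, div_pow]
  field_simp

private lemma logcosh_lim :
    Tendsto (fun x : ℝ => Real.log (Real.cosh x) / x ^ 2) (𝓝[≠] (0:ℝ)) (𝓝 (1/2)) := by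
  have hmap : Tendsto (fun x : ℝ => Real.cosh x - 1) (𝓝[≠] (0:ℝ)) (𝓝[≠] (0:ℝ)) := by
    apply tendsto_nhdsWithin_of_tendsto_nhds_of_eventually_within
    · have h : Tendsto (fun x : ℝ => Real.cosh x - 1) (𝓝 (0:ℝ)) (𝓝 (Real.cosh 0 - 1)) :=
        (Real.continuous_cosh.sub continuous_const).tendsto 0
      simpa using h.mono_left nhdsWithin_le_nhds
    · filter_upwards [self_mem_nhdsWithin] with x hx
      simp only [Set.mem_compl_iff, Set.mem_singleton_iff] at hx ⊢
      have := Real.one_lt_cosh.mpr hx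
      intro h; linarith
  have h1 := log1p_slope.comp hmap
  have h2 := h1.mul cosh_sub_one_lim
  rw [one_mul] at h2
  refine h2.congr' ?_
  filter_upwards [self_mem_nhdsWithin] with x hx
  simp only [Set.mem_compl_iff, Set.mem_singleton_iff] at hx
  have hb : Real.cosh x - 1 ≠ 0 := by
    have := Real.one_lt_cosh.mpr hx; linarith
  simp only [Function.comp]
  rw [show (1:ℝ) + (Real.cosh x - 1) = Real.cosh x by ring, div_mul_div_comm,
    mul_comm (Real.log (Real.cosh x)) (Real.cosh x - 1), mul_div_mul_left _ _ hb]

theorem stmt_6 (t : ℝ) :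
    Filter.Tendsto
      (fun n : ℕ =>
        Real.exp (-(((n : ℝ) + 2) / Real.sqrt n) * t) * Real.exp ((2 / Real.sqrt n) * t) *
          ((1 + Real.exp ((2 / Real.sqrt n) * t)) / 2) ^ n)
      Filter.atTop (nhds (Real.exp (t ^ 2 / 2))) := by
  rcases eq_or_ne t 0 with ht | ht
  · subst ht
    simp only [mul_zero, Real.exp_zero]
    norm_num
  · have hx : Tendsto (fun n : ℕ => t / Real.sqrt n) atTop (𝓝[≠] (0:ℝ)) := by
      apply tendsto_nhdsWithin_of_tendsto_nhds_of_eventually_within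
      · have h1 : Tendsto (fun n : ℕ => ((n:ℝ))⁻¹) atTop (𝓝 0) :=
          tendsto_inv_atTop_nhds_zero_nat
        have h2 := (Real.continuous_sqrt.tendsto 0).comp h1
        rw [Real.sqrt_zero] at h2
        have h3 : Tendsto (fun n : ℕ => t * Real.sqrt ((n:ℝ)⁻¹)) atTop (𝓝 (t * 0)) :=
          h2.const_mul t
        rw [mul_zero] at h3
        refine h3.congr fun n => ?_
        rw [Real.sqrt_inv]; ring
      · filter_upwards [eventually_ge_atTop 1] with n hn
        have hn0 : (0:ℝ) < n := by exact_mod_cast hn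
        have hs : 0 < Real.sqrt n := Real.sqrt_pos.mpr hn0
        simp only [Set.mem_compl_iff, Set.mem_singleton_iff]
        exact div_ne_zero ht hs.ne'
    have hlim := (logcosh_lim.comp hx).const_mul (t ^ 2)
    have hfin := (Real.continuous_exp.tendsto _).comp hlim
    rw [show t ^ 2 * (1/2) = t ^ 2 / 2 by ring] at hfin
    refine Filter.Tendsto.congr' ?_ hfin
    filter_upwards [eventually_ge_atTop 1] with n hn
    have hn0 : (0:ℝ) < n := by exact_mod_cast hn
    have hs : 0 < Real.sqrt n := Real.sqrt_pos.mpr hn0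
    set s := Real.sqrt (n:ℝ) with hsdef
    set x := t / s with hxdef
    have hs2 : s ^ 2 = n := Real.sq_sqrt hn0.le
    have hx2 : x ^ 2 = t ^ 2 / n := by rw [hxdef, div_pow, hs2]
    have hxne : x ≠ 0 := div_ne_zero ht hs.ne'
    simp only [Function.comp]
    have hxn : t ^ 2 * (Real.log (Real.cosh x) / x ^ 2) = n * Real.log (Real.cosh x) := by
      rw [hx2]
      field_simp
    rw [hxn]
    have hcoshx : (1 + Real.exp ((2 / s) * t)) / 2 = Real.exp x * Real.cosh x := by
      rw [Real.cosh_eq, Real.exp_neg, show (2 / s) * t = x + x by rw [hxdef]; ring,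
        Real.exp_add]
      field_simp
      ring
    have h0 : -(((n:ℝ) + 2) / s) * t + ((2 / s) * t + (n:ℝ) * x) = 0 := by
      rw [hxdef]
      field_simp
      ring
    calc Real.exp ((n:ℝ) * Real.log (Real.cosh x))
        = Real.cosh x ^ n := by
          rw [Real.exp_nat_mul, Real.exp_log (Real.cosh_pos x)]
      _ = Real.exp (-(((n:ℝ) + 2) / s) * t + ((2 / s) * t + (n:ℝ) * x)) * Real.cosh x ^ n := by
          rw [h0, Real.exp_zero, one_mul]
      _ = Real.exp (-(((n:ℝ) + 2) / s) * t) * Real.exp ((2 / s) * t) *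
            ((1 + Real.exp ((2 / s) * t)) / 2) ^ n := by
          rw [hcoshx, mul_pow, ← Real.exp_nat_mul, Real.exp_add, Real.exp_add]
          ring
end

section
/- The polynomial 4z + 4z^3 is not interpolating: its spectrum (the set of exponents with nonzero coefficients) is {1, 3}, which is not an integer interval. -/
open Polynomial

theorem Set.not_ordConnected_pair {α : Type*} [Preorder α] {a b c : α} (hac : a < c)
    (hcb : c < b) : ¬ ({a, b} : Set α).OrdConnected := by
  intro h
  rcases h.out (mem_insert a {b}) (mem_insert_of_mem a rfl) ⟨hac.le, hcb.le⟩ with rfl | rfl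
  · exact hac.false
  · exact hcb.false

theorem Set.Icc_ne_pair {α : Type*} [Preorder α] {a b c : α} (hac : a < c) (hcb : c < b)
    (m n : α) : Set.Icc m n ≠ {a, b} := fun h =>
  Set.not_ordConnected_pair hac hcb (h ▸ Set.ordConnected_Icc)

theorem Polynomial.setOf_coeff_ne_zero {R : Type*} [Semiring R] (p : R[X]) :
    {i : ℕ | p.coeff i ≠ 0} = p.support := by
  ext i
  exact mem_support_iff.symm

theorem stmt_8 :
    {i : ℕ | ((4 : Polynomial ℤ) * X + 4 * X ^ 3).coeff i ≠ 0} = {1, 3} ∧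
      ∀ m n : ℕ, (Set.Icc m n : Set ℕ) ≠ ({1, 3} : Set ℕ) := by
  refine ⟨?_, Set.Icc_ne_pair (c := 2) (by norm_num) (by norm_num)⟩
  have hbinomial : (4 : ℤ[X]) * X + 4 * X ^ 3 = C 4 * X ^ 1 + C 4 * X ^ 3 := by simp
  rw [setOf_coeff_ne_zero, hbinomial, support_binomial (by norm_num) four_ne_zero four_ne_zero,
    Finset.coe_pair]
end

section
/- Let G be a finite connected multigraph and for an edge subset A ⊆ E(G) let c(A) denote the number of connected components of the spanning subgraph (V(G), A) (isolated vertices count as components). Let ξ(G) = min{ c(E(G) \ T) : T a spanning tree of G }. Then for every A ⊆ E(G), c(A) + c(E(G) \ A) ≥ 1 + ξ(G). -/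
open SimpleGraph

/-- Number of connected components of the spanning subgraph of a multigraph
(vertex set `V`, edges indexed by `E` with endpoints `ε`) on the edge subset `A`.
Isolated vertices count as components. -/
noncomputable def comps {V E : Type*} (ε : E → Sym2 V) (A : Set E) : ℕ :=
  Nat.card (SimpleGraph.fromEdgeSet (ε '' A)).ConnectedComponent

/-- `T` is a spanning tree of the multigraph `(V, E, ε)`: the spanning subgraph on `T`
is connected and acyclic (in particular `T` uses no loops or parallel edges). -/
def IsSpanningTree {V E : Type*} (ε : E → Sym2 V) (T : Set E) : Prop :=
  (SimpleGraph.fromEdgeSet (ε '' T)).Connected ∧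
    (SimpleGraph.fromEdgeSet (ε '' T)).IsAcyclic ∧
    Set.InjOn ε T ∧ ∀ t ∈ T, ¬ (ε t).IsDiag

namespace Stmt18Aux

open Function

variable {V : Type*}

lemma sym2_rep (z : Sym2 V) : ∃ u v, z = s(u, v) := by
  induction z using Sym2.ind with | _ u v => exact ⟨u, v, rfl⟩

lemma cc_finite [Finite V] (G : SimpleGraph V) : Finite G.ConnectedComponent :=
  Finite.of_surjective G.connectedComponentMk Quot.mk_surjective

lemma cc_map_surj {G H : SimpleGraph V} (h : G ≤ H) :
    Surjective (ConnectedComponent.map (Hom.ofLE h)) := by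
  intro c
  induction c using ConnectedComponent.ind with
  | _ v => exact ⟨G.connectedComponentMk v, rfl⟩

lemma reach_of_le_of_adj {H G : SimpleGraph V} (hadj : ∀ x y, G.Adj x y → H.Reachable x y)
    {x y : V} (h : G.Reachable x y) : H.Reachable x y := by
  obtain ⟨w⟩ := h
  induction w with
  | nil => exact Reachable.refl _
  | cons h p ih => exact (hadj _ _ h).trans ih

lemma reach_sup_edge {G : SimpleGraph V} {u v x y : V}
    (h : (G ⊔ edge u v).Reachable x y) :
    G.Reachable x y ∨ (G.Reachable x u ∧ G.Reachable v y) ∨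
      (G.Reachable x v ∧ G.Reachable u y) := by
  obtain ⟨w⟩ := h
  induction w with
  | nil => exact Or.inl (Reachable.refl _)
  | cons h p ih =>
    rcases h with h | h
    · rcases ih with r | ⟨r1, r2⟩ | ⟨r1, r2⟩
      · exact Or.inl (h.reachable.trans r)
      · exact Or.inr (Or.inl ⟨h.reachable.trans r1, r2⟩)
      · exact Or.inr (Or.inr ⟨h.reachable.trans r1, r2⟩)
    · rw [edge_adj] at h
      rcases h.1 with ⟨hx, hz⟩ | ⟨hx, hz⟩ <;> subst hx <;> subst hz
      · rcases ih with r | ⟨r1, r2⟩ | ⟨r1, r2⟩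
        · exact Or.inr (Or.inl ⟨Reachable.refl _, r⟩)
        · exact Or.inl (r1.symm.trans r2)
        · exact Or.inl r2
      · rcases ih with r | ⟨r1, r2⟩ | ⟨r1, r2⟩
        · exact Or.inr (Or.inr ⟨Reachable.refl _, r⟩)
        · exact Or.inl r2
        · exact Or.inl (r1.symm.trans r2)

lemma card_cc_sup_edge [Finite V] (G : SimpleGraph V) (u v : V) :
    Nat.card G.ConnectedComponent ≤ Nat.card (G ⊔ edge u v).ConnectedComponent + 1 := by
  classical
  haveI hfin := cc_finite (G ⊔ edge u v)
  haveI hfin' := cc_finite G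
  set f : G.ConnectedComponent → (G ⊔ edge u v).ConnectedComponent :=
    ConnectedComponent.map (Hom.ofLE le_sup_left) with hf
  set g : G.ConnectedComponent → Option ((G ⊔ edge u v).ConnectedComponent) :=
    fun c => if c = G.connectedComponentMk u then none else some (f c) with hg
  have hginj : Injective g := by
    intro c1 c2 h
    by_cases h1 : c1 = G.connectedComponentMk u <;>
      by_cases h2 : c2 = G.connectedComponentMk u
    · rw [h1, h2]
    · simp [hg, h1, h2] at h
    · simp [hg, h1, h2] at h
    · rw [hg] at h
      simp only [if_neg h1, if_neg h2, Option.some.injEq] at h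
      obtain ⟨x, rfl⟩ := Quot.exists_rep c1
      obtain ⟨y, rfl⟩ := Quot.exists_rep c2
      have hr : (G ⊔ edge u v).Reachable x y := ConnectedComponent.eq.mp h
      rcases reach_sup_edge hr with r | ⟨r1, r2⟩ | ⟨r1, r2⟩
      · exact ConnectedComponent.sound r
      · exact absurd (ConnectedComponent.sound r1) h1
      · exact absurd (ConnectedComponent.sound r2.symm) h2
  haveI := Fintype.ofFinite ((G ⊔ edge u v).ConnectedComponent)
  calc Nat.card G.ConnectedComponent
      ≤ Nat.card (Option ((G ⊔ edge u v).ConnectedComponent)) :=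
        Nat.card_le_card_of_injective g hginj
    _ = Nat.card (G ⊔ edge u v).ConnectedComponent + 1 := by
        simp [Nat.card_eq_fintype_card]

variable {E : Type*} (ε : E → Sym2 V)

lemma comps_le_of_subset [Finite V] {A B : Set E} (h : A ⊆ B) : comps ε B ≤ comps ε A := by
  haveI := cc_finite (fromEdgeSet (ε '' A))
  exact Nat.card_le_card_of_surjective _
    (cc_map_surj (fromEdgeSet_mono (Set.image_mono (f := ε) h)))

lemma comps_eq_of_adj_reach [Finite V] {A B : Set E} (hBA : B ⊆ A)
    (hadj : ∀ x y, (fromEdgeSet (ε '' A)).Adj x y → (fromEdgeSet (ε '' B)).Reachable x y) :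
    comps ε B = comps ε A := by
  haveI := cc_finite (fromEdgeSet (ε '' A))
  haveI := cc_finite (fromEdgeSet (ε '' B))
  refine le_antisymm ?_ (comps_le_of_subset ε hBA)
  set g : (fromEdgeSet (ε '' A)).ConnectedComponent →
      (fromEdgeSet (ε '' B)).ConnectedComponent :=
    ConnectedComponent.lift (fun v => (fromEdgeSet (ε '' B)).connectedComponentMk v)
      (fun v w p _ => ConnectedComponent.sound (reach_of_le_of_adj hadj p.reachable)) with hgdef
  have hgs : Surjective g := by
    intro c
    induction c using ConnectedComponent.ind with
    | _ v => exact ⟨(fromEdgeSet (ε '' A)).connectedComponentMk v, rfl⟩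
  exact Nat.card_le_card_of_surjective g hgs

lemma comps_insert_lt [Finite V] {A : Set E} {e : E} {p q : V}
    (hep : ε e = s(p, q)) (hpq : p ≠ q)
    (hnr : ¬ (fromEdgeSet (ε '' A)).Reachable p q) :
    comps ε (insert e A) < comps ε A := by
  haveI := cc_finite (fromEdgeSet (ε '' A))
  haveI := cc_finite (fromEdgeSet (ε '' (insert e A)))
  set f := ConnectedComponent.map
    (Hom.ofLE
      (fromEdgeSet_mono (Set.image_mono (f := ε) (Set.subset_insert e A)))) with hf
  have hsurj : Surjective f := cc_map_surj _
  have hle : comps ε (insert e A) ≤ comps ε A :=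
    comps_le_of_subset ε (Set.subset_insert e A)
  rcases lt_or_eq_of_le hle with h | h
  · exact h
  · exfalso
    have hbij : Bijective f :=
      (Nat.bijective_iff_surjective_and_card f).mpr ⟨hsurj, h.symm⟩
    have hadj : (fromEdgeSet (ε '' (insert e A))).Adj p q :=
      (fromEdgeSet_adj _).mpr ⟨⟨e, Set.mem_insert e A, hep⟩, hpq⟩
    have heq : f ((fromEdgeSet (ε '' A)).connectedComponentMk p) =
        f ((fromEdgeSet (ε '' A)).connectedComponentMk q) :=
      ConnectedComponent.sound hadj.reachable
    exact hnr (ConnectedComponent.eq.mp (hbij.injective heq))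

lemma comps_le_insert [Finite V] (X : Set E) (e : E) :
    comps ε X ≤ comps ε (insert e X) + 1 := by
  obtain ⟨u, v, he⟩ := sym2_rep (ε e)
  have hG : fromEdgeSet (ε '' insert e X) = fromEdgeSet (ε '' X) ⊔ edge u v := by
    rw [Set.image_insert_eq, Set.insert_eq, fromEdgeSet_union, he, sup_comm]
    rfl
  unfold comps
  rw [hG]
  exact card_cc_sup_edge _ u v

lemma comps_eq_one_of_connected {A : Set E} (h : (fromEdgeSet (ε '' A)).Connected) :
    comps ε A = 1 :=
  Nat.card_eq_one_iff_unique.mpr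
    ⟨h.preconnected.subsingleton_connectedComponent,
      ⟨(fromEdgeSet (ε '' A)).connectedComponentMk h.nonempty.some⟩⟩

lemma connected_of_comps_eq_one {A : Set E} (h : comps ε A = 1) :
    (fromEdgeSet (ε '' A)).Connected := by
  obtain ⟨hsub, hne⟩ := Nat.card_eq_one_iff_unique.mp h
  have hV : Nonempty V := by
    obtain ⟨c⟩ := hne
    obtain ⟨v, -⟩ := Quot.exists_rep c
    exact ⟨v⟩
  haveI := hV
  exact ⟨fun x y => ConnectedComponent.eq.mp (Subsingleton.elim _ _)⟩

end Stmt18Aux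

open Stmt18Aux

theorem stmt_18 {V E : Type*} [Fintype V] [Fintype E] (ε : E → Sym2 V)
    (hconn : (SimpleGraph.fromEdgeSet (ε '' (Set.univ : Set E))).Connected)
    (ξ : ℕ)
    (hξ : IsLeast {k : ℕ | ∃ T : Set E, IsSpanningTree ε T ∧ comps ε Tᶜ = k} ξ) :
    ∀ A : Set E, 1 + ξ ≤ comps ε A + comps ε Aᶜ := by
  have key : ∀ n : ℕ, ∀ A : Set E,
      comps ε A * (Fintype.card E + 1) + A.ncard ≤ n →
      ∃ T : Set E, IsSpanningTree ε T ∧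
        comps ε T + comps ε Tᶜ ≤ comps ε A + comps ε Aᶜ := by
    intro n
    induction n using Nat.strong_induction_on with
    | _ n ih =>
    intro A hA
    by_cases hrem : ∃ e ∈ A, ∃ x y, ε e = s(x, y) ∧
        (fromEdgeSet (ε '' (A \ {e}))).Reachable x y
    · obtain ⟨e, heA, x, y, hxy, hre⟩ := hrem
      have hadj : ∀ p q, (fromEdgeSet (ε '' A)).Adj p q →
          (fromEdgeSet (ε '' (A \ {e}))).Reachable p q := by
        intro p q hpq
        rw [fromEdgeSet_adj] at hpq
        obtain ⟨⟨c, hcA, hc⟩, hne⟩ := hpq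
        by_cases hce : c = e
        · subst hce
          rw [hxy] at hc
          rcases Sym2.eq_iff.mp hc with ⟨rfl, rfl⟩ | ⟨rfl, rfl⟩
          · exact hre
          · exact hre.symm
        · exact Adj.reachable ((fromEdgeSet_adj _).mpr ⟨⟨c, ⟨hcA, hce⟩, hc⟩, hne⟩)
      have h1 : comps ε (A \ {e}) = comps ε A :=
        comps_eq_of_adj_reach ε Set.diff_subset hadj
      have h2 : comps ε (A \ {e})ᶜ ≤ comps ε Aᶜ :=
        comps_le_of_subset ε (Set.compl_subset_compl.mpr Set.diff_subset)
      have hcard : (A \ {e}).ncard < A.ncard :=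
        Set.ncard_diff_singleton_lt_of_mem heA (Set.toFinite A)
      have hmn : comps ε (A \ {e}) * (Fintype.card E + 1) + (A \ {e}).ncard < n := by
        rw [h1]; omega
      obtain ⟨T, hT, hle⟩ := ih _ hmn (A \ {e}) le_rfl
      exact ⟨T, hT, by omega⟩
    · push_neg at hrem
      by_cases hone : comps ε A = 1
      · have hnd : ∀ t ∈ A, ¬ (ε t).IsDiag := by
          intro t ht hd
          obtain ⟨u, w, huw⟩ := sym2_rep (ε t)
          rw [huw] at hd
          rw [Sym2.mk_isDiag_iff] at hd
          subst hd
          exact hrem t ht u u huw (Reachable.refl u)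
        have hinj : Set.InjOn ε A := by
          intro a ha b hb hab
          by_contra hne
          obtain ⟨u, w, huw⟩ := sym2_rep (ε a)
          have huwne : u ≠ w := by
            intro h
            exact hnd a ha (by rw [huw, h]; exact Sym2.mk_isDiag_iff.mpr rfl)
          refine hrem a ha u w huw (Adj.reachable ((fromEdgeSet_adj _).mpr ⟨⟨b, ⟨hb, ?_⟩, ?_⟩, huwne⟩))
          · exact fun h => hne (Set.mem_singleton_iff.mp h).symm
          · rw [← hab, huw]
        refine ⟨A, ⟨connected_of_comps_eq_one ε hone, ?_, hinj, hnd⟩, le_rfl⟩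
        rw [isAcyclic_iff_forall_adj_isBridge]
        intro x y hxy
        rw [isBridge_iff]
        intro hre
        obtain ⟨⟨a, haA, hax⟩, hne⟩ := (fromEdgeSet_adj _).mp hxy
        refine hrem a haA x y hax (hre.mono ?_)
        intro p q hpq
        obtain ⟨hpq1, hpq2⟩ := (sdiff_adj _ _ _ _).mp hpq
        obtain ⟨⟨c, hcA, hc⟩, hnepq⟩ := (fromEdgeSet_adj _).mp hpq1
        have hca : c ≠ a := by
          intro h
          subst h
          exact hpq2 ((fromEdgeSet_adj _).mpr ⟨by rw [← hc, hax]; exact rfl, hnepq⟩)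
        exact (fromEdgeSet_adj _).mpr ⟨⟨c, ⟨hcA, hca⟩, hc⟩, hnepq⟩
      · have hA_nc : ¬ (fromEdgeSet (ε '' A)).Connected :=
          fun h => hone (comps_eq_one_of_connected ε h)
        haveI : Nonempty V := hconn.nonempty
        have hpre : ¬ (fromEdgeSet (ε '' A)).Preconnected :=
          fun h => hA_nc ⟨h⟩
        rw [Preconnected] at hpre
        push_neg at hpre
        obtain ⟨x, y, hnr⟩ := hpre
        have hexpq : ∃ p q, (fromEdgeSet (ε '' (Set.univ : Set E))).Adj p q ∧
            ¬ (fromEdgeSet (ε '' A)).Reachable p q := by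
          by_contra hcon
          push_neg at hcon
          exact hnr (reach_of_le_of_adj (fun p q h => hcon p q h) (hconn.preconnected x y))
        obtain ⟨p, q, hadj, hnre⟩ := hexpq
        obtain ⟨⟨e, -, hep⟩, hpqne⟩ := (fromEdgeSet_adj _).mp hadj
        have heA : e ∉ A :=
          fun h => hnre (Adj.reachable ((fromEdgeSet_adj _).mpr ⟨⟨e, h, hep⟩, hpqne⟩))
        have h1 : comps ε (insert e A) < comps ε A := comps_insert_lt ε hep hpqne hnre
        have h2 : comps ε (insert e A)ᶜ ≤ comps ε Aᶜ + 1 := by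
          have h3 := comps_le_insert ε (insert e A)ᶜ e
          have h4 : insert e ((insert e A)ᶜ) = Aᶜ := by
            ext a
            by_cases ha : a = e <;> simp [ha, heA]
          rw [h4] at h3
          exact h3
        have hK : (insert e A).ncard ≤ Fintype.card E := by
          have := Set.ncard_le_ncard (Set.subset_univ (insert e A)) (Set.toFinite _)
          rwa [Set.ncard_univ, Nat.card_eq_fintype_card] at this
        have hm : comps ε (insert e A) * (Fintype.card E + 1) + (insert e A).ncard < n := by
          have e3 : (comps ε (insert e A) + 1) * (Fintype.card E + 1) ≤
              comps ε A * (Fintype.card E + 1) := Nat.mul_le_mul_right _ h1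
          have e4 : comps ε (insert e A) * (Fintype.card E + 1) + (Fintype.card E + 1) =
              (comps ε (insert e A) + 1) * (Fintype.card E + 1) := by ring
          omega
        obtain ⟨T, hT, hle⟩ := ih _ hm (insert e A) le_rfl
        exact ⟨T, hT, by omega⟩
  intro A
  obtain ⟨T, hT, hle⟩ := key (comps ε A * (Fintype.card E + 1) + A.ncard) A le_rfl
  have h1 : comps ε T = 1 := comps_eq_one_of_connected ε hT.1
  have h2 : ξ ≤ comps ε Tᶜ := hξ.2 ⟨T, hT, rfl⟩
  omega
end
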